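/- arXiv:0910.4701 — 2 statements merged into one kernel-verified Lean document; each statement's English description precedes it below -/
import Mathlib

section
/- Fix δ ∈ ℝ. There exists a constant C > 0 such that for every u ∈ V and every v ∈ H, the sequence B(u,v) belongs to H and |B(u,v)|_H ≤ C ||u||_V |v|_H, where B is the Sabra bilinear operator with parameter δ. -/
open ComplexConjugate

noncomputable section

/-- Extension of a sequence `(u_n)_{n ≥ 1}` to integer indices, with the boundary
convention `u_m = 0` for `m ≤ 0` (in particular `u_0 = u_{-1} = 0`). -/
def ext (u : ℕ → ℂ) : ℤ → ℂ := fun m => if 1 ≤ m then u m.toNat else 0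

/-- Wave numbers `k_n = k₀ 2^n`. -/
def kseq (k₀ : ℝ) (n : ℤ) : ℝ := k₀ * 2 ^ n

/-- The Sabra bilinear operator with parameter `δ`. -/
def sabraB (k₀ δ : ℝ) (u v : ℕ → ℂ) : ℕ → ℂ := fun n =>
  (Complex.I / 3) * (kseq k₀ ((n : ℤ) + 1)) *
      ((1 + (δ : ℂ)) * conj (ext v ((n : ℤ) + 1)) * ext u ((n : ℤ) + 2)
        + (2 - (δ : ℂ)) * conj (ext u ((n : ℤ) + 1)) * ext v ((n : ℤ) + 2))
  + (Complex.I / 3) * (kseq k₀ (n : ℤ)) *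
      ((1 - 2 * (δ : ℂ)) * conj (ext u ((n : ℤ) - 1)) * ext v ((n : ℤ) + 1)
        - (1 + (δ : ℂ)) * conj (ext v ((n : ℤ) - 1)) * ext u ((n : ℤ) + 1))
  + (Complex.I / 3) * (kseq k₀ ((n : ℤ) - 1)) *
      ((2 - (δ : ℂ)) * ext u ((n : ℤ) - 1) * ext v ((n : ℤ) - 2)
        + (1 - 2 * (δ : ℂ)) * ext u ((n : ℤ) - 2) * ext v ((n : ℤ) - 1))

/-- Membership in `H`: square-summability over `n ≥ 1`. -/
def memH (u : ℕ → ℂ) : Prop := Summable (fun n : ℕ => ‖u (n + 1)‖ ^ 2)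

/-- The `H`-norm `|u|_H = (∑_{n ≥ 1} |u_n|²)^{1/2}`. -/
def normH (u : ℕ → ℂ) : ℝ := Real.sqrt (∑' n : ℕ, ‖u (n + 1)‖ ^ 2)

/-- Membership in `V`: `u ∈ H` and `∑_{n ≥ 1} k_n² |u_n|² < ∞`. -/
def memV (k₀ : ℝ) (u : ℕ → ℂ) : Prop :=
  memH u ∧ Summable (fun n : ℕ => (kseq k₀ (n + 1)) ^ 2 * ‖u (n + 1)‖ ^ 2)

/-- The `V`-norm `‖u‖_V = (∑_{n ≥ 1} k_n² |u_n|²)^{1/2}`. -/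
def normV (k₀ : ℝ) (u : ℕ → ℂ) : ℝ :=
  Real.sqrt (∑' n : ℕ, (kseq k₀ (n + 1)) ^ 2 * ‖u (n + 1)‖ ^ 2)

private lemma kseq_pos {k₀ : ℝ} (hk₀ : 0 < k₀) (m : ℤ) : 0 < kseq k₀ m := by
  unfold kseq; positivity

private lemma kseq_le {k₀ : ℝ} (hk₀ : 0 < k₀) {a b : ℤ} (h : a ≤ b + 1) :
    kseq k₀ a ≤ 2 * kseq k₀ b := by
  unfold kseq
  have h2 : (2:ℝ) ^ a ≤ 2 ^ (b + 1) := zpow_le_zpow_right₀ (by norm_num) h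
  have h3 : (2:ℝ) ^ (b + 1) = 2 * 2 ^ b := by
    rw [zpow_add_one₀ (by norm_num : (2:ℝ) ≠ 0)]; ring
  nlinarith [hk₀.le]

private lemma sup_bound {k₀ : ℝ} (hk₀ : 0 < k₀) {u : ℕ → ℂ} (hu : memV k₀ u) (b : ℤ) :
    kseq k₀ b * ‖ext u b‖ ≤ normV k₀ u := by
  by_cases hb : 1 ≤ b
  · obtain ⟨n, rfl⟩ : ∃ n : ℕ, b = (n : ℤ) + 1 := ⟨(b - 1).toNat, by omega⟩
    have hext : ext u ((n : ℤ) + 1) = u (n + 1) := by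
      have h1 : (1:ℤ) ≤ (n : ℤ) + 1 := by omega
      have h2 : ((n : ℤ) + 1).toNat = n + 1 := by omega
      simp only [ext, if_pos h1, h2]
    rw [hext]
    have h1 : (kseq k₀ ((n:ℤ) + 1)) ^ 2 * ‖u (n + 1)‖ ^ 2 ≤
        ∑' j : ℕ, (kseq k₀ ((j:ℤ) + 1)) ^ 2 * ‖u (j + 1)‖ ^ 2 :=
      Summable.le_tsum hu.2 n (fun i _ => by positivity)
    rw [normV]
    apply Real.le_sqrt_of_sq_le
    calc (kseq k₀ ((n:ℤ) + 1) * ‖u (n + 1)‖) ^ 2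
        = (kseq k₀ ((n:ℤ) + 1)) ^ 2 * ‖u (n + 1)‖ ^ 2 := by ring
      _ ≤ _ := h1
  · have : ext u b = 0 := by simp only [ext, if_neg hb]
    rw [this]
    simp [Real.sqrt_nonneg, normV]

private lemma k_bound {k₀ : ℝ} (hk₀ : 0 < k₀) {u : ℕ → ℂ} (hu : memV k₀ u) {a b : ℤ}
    (h : a ≤ b + 1) : kseq k₀ a * ‖ext u b‖ ≤ 2 * normV k₀ u := by
  calc kseq k₀ a * ‖ext u b‖ ≤ (2 * kseq k₀ b) * ‖ext u b‖ :=
        mul_le_mul_of_nonneg_right (kseq_le hk₀ h) (norm_nonneg _)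
    _ = 2 * (kseq k₀ b * ‖ext u b‖) := by ring
    _ ≤ 2 * normV k₀ u := by linarith [sup_bound hk₀ hu b]

private lemma shift_fwd (v : ℕ → ℂ) (hv : memH v) (d : ℕ) :
    Summable (fun n : ℕ => ‖ext v ((n : ℤ) + d + 1)‖ ^ 2) ∧
    (∑' n : ℕ, ‖ext v ((n : ℤ) + d + 1)‖ ^ 2) ≤ ∑' n : ℕ, ‖v (n + 1)‖ ^ 2 := by
  have key : (fun n : ℕ => ‖ext v ((n : ℤ) + d + 1)‖ ^ 2) =
      fun n : ℕ => ‖v ((n + d) + 1)‖ ^ 2 := by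
    funext n
    have h1 : (1:ℤ) ≤ (n : ℤ) + d + 1 := by omega
    have h2 : ((n : ℤ) + d + 1).toNat = (n + d) + 1 := by omega
    simp only [ext, if_pos h1, h2]
  have hv' : Summable (fun n : ℕ => ‖v (n + 1)‖ ^ 2) := hv
  rw [key]
  constructor
  · exact (summable_nat_add_iff (f := fun n : ℕ => ‖v (n + 1)‖ ^ 2) d).2 hv'
  · have h3 := Summable.sum_add_tsum_nat_add d hv'
    have h4 : 0 ≤ ∑ i ∈ Finset.range d, ‖v (i + 1)‖ ^ 2 :=
      Finset.sum_nonneg (fun i _ => by positivity)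
    linarith [h3]

private lemma shift_bwd (v : ℕ → ℂ) (hv : memH v) (e : ℕ) :
    Summable (fun n : ℕ => ‖ext v ((n : ℤ) - e + 1)‖ ^ 2) ∧
    (∑' n : ℕ, ‖ext v ((n : ℤ) - e + 1)‖ ^ 2) ≤ ∑' n : ℕ, ‖v (n + 1)‖ ^ 2 := by
  set h : ℕ → ℝ := fun n : ℕ => ‖ext v ((n : ℤ) - e + 1)‖ ^ 2 with hh
  have key : (fun n : ℕ => h (n + e)) = fun n : ℕ => ‖v (n + 1)‖ ^ 2 := by
    funext n
    have h1 : (1:ℤ) ≤ ((n + e : ℕ) : ℤ) - e + 1 := by omega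
    have h2 : (((n + e : ℕ) : ℤ) - e + 1).toNat = n + 1 := by omega
    simp only [hh, ext, if_pos h1, h2]
  have hs : Summable h := (summable_nat_add_iff (f := h) e).1 (by rw [key]; exact hv)
  have keyz : ∀ i ∈ Finset.range e, h i = 0 := by
    intro i hi
    have hi' : i < e := Finset.mem_range.1 hi
    have h1 : ¬ (1:ℤ) ≤ (i : ℤ) - e + 1 := by omega
    simp only [hh, ext, if_neg h1, norm_zero]
    norm_num
  refine ⟨hs, ?_⟩
  have h3 := Summable.sum_add_tsum_nat_add e hs
  rw [Finset.sum_eq_zero keyz, zero_add] at h3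
  rw [← h3, key]

private lemma triA {c x y : ℂ} {D : ℝ} (hc : ‖c‖ ≤ D) :
    ‖c * conj x * y‖ ≤ D * (‖y‖ * ‖x‖) := by
  rw [norm_mul, norm_mul, RCLike.norm_conj]
  calc ‖c‖ * ‖x‖ * ‖y‖ ≤ D * ‖x‖ * ‖y‖ := by gcongr
    _ = D * (‖y‖ * ‖x‖) := by ring

private lemma triB {c x y : ℂ} {D : ℝ} (hc : ‖c‖ ≤ D) :
    ‖c * conj x * y‖ ≤ D * (‖x‖ * ‖y‖) := by
  rw [norm_mul, norm_mul, RCLike.norm_conj]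
  calc ‖c‖ * ‖x‖ * ‖y‖ ≤ D * ‖x‖ * ‖y‖ := by gcongr
    _ = D * (‖x‖ * ‖y‖) := by ring

private lemma triC {c x y : ℂ} {D : ℝ} (hc : ‖c‖ ≤ D) :
    ‖c * x * y‖ ≤ D * (‖x‖ * ‖y‖) := by
  rw [norm_mul, norm_mul]
  calc ‖c‖ * ‖x‖ * ‖y‖ ≤ D * ‖x‖ * ‖y‖ := by gcongr
    _ = D * (‖x‖ * ‖y‖) := by ring

private lemma group_norm {k₀ : ℝ} (hk₀ : 0 < k₀) (a : ℤ) (s : ℂ) :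
    ‖Complex.I / 3 * (kseq k₀ a : ℂ) * s‖ = kseq k₀ a / 3 * ‖s‖ := by
  rw [norm_mul, norm_mul, norm_div, Complex.norm_I]
  have h1 : ‖(3 : ℂ)‖ = 3 := by norm_num
  have h2 : ‖((kseq k₀ a : ℝ) : ℂ)‖ = kseq k₀ a := by
    rw [Complex.norm_real, Real.norm_eq_abs, abs_of_pos (kseq_pos hk₀ a)]
  rw [h1, h2]; ring

private lemma term_bound {k₀ : ℝ} (hk₀ : 0 < k₀) {u : ℕ → ℂ} (hu : memV k₀ u)
    {a b : ℤ} (hab : a ≤ b + 1) {D : ℝ} (hD : 0 ≤ D) {s : ℂ} {P : ℝ} (hP : 0 ≤ P)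
    (hs : ‖s‖ ≤ D * (‖ext u b‖ * P)) :
    kseq k₀ a / 3 * ‖s‖ ≤ 2 * D / 3 * normV k₀ u * P := by
  have hk := (kseq_pos hk₀ a).le
  calc kseq k₀ a / 3 * ‖s‖ ≤ kseq k₀ a / 3 * (D * (‖ext u b‖ * P)) :=
        mul_le_mul_of_nonneg_left hs (div_nonneg hk (by norm_num))
    _ = D / 3 * (kseq k₀ a * ‖ext u b‖) * P := by ring
    _ ≤ D / 3 * (2 * normV k₀ u) * P :=
        mul_le_mul_of_nonneg_right
          (mul_le_mul_of_nonneg_left (k_bound hk₀ hu hab) (div_nonneg hD (by norm_num))) hP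
    _ = 2 * D / 3 * normV k₀ u * P := by ring

private def BX (k₀ δ : ℝ) (u v : ℕ → ℂ) (N : ℤ) : ℂ :=
  Complex.I / 3 * (kseq k₀ (N + 1) : ℂ) *
    ((1 + (δ : ℂ)) * conj (ext v (N + 1)) * ext u (N + 2)
      + (2 - (δ : ℂ)) * conj (ext u (N + 1)) * ext v (N + 2))
  + Complex.I / 3 * (kseq k₀ N : ℂ) *
    ((1 - 2 * (δ : ℂ)) * conj (ext u (N - 1)) * ext v (N + 1)
      - (1 + (δ : ℂ)) * conj (ext v (N - 1)) * ext u (N + 1))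
  + Complex.I / 3 * (kseq k₀ (N - 1) : ℂ) *
    ((2 - (δ : ℂ)) * ext u (N - 1) * ext v (N - 2)
      + (1 - 2 * (δ : ℂ)) * ext u (N - 2) * ext v (N - 1))

private lemma master (k₀ δ : ℝ) (hk₀ : 0 < k₀) {u : ℕ → ℂ} (v : ℕ → ℂ)
    (hu : memV k₀ u) (N : ℤ) :
    ‖BX k₀ δ u v N‖
    ≤ (4 + 4 * |δ|) * normV k₀ u *
        (‖ext v (N + 1)‖ + ‖ext v (N + 2)‖ + ‖ext v (N - 1)‖ + ‖ext v (N - 2)‖) := by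
  rw [BX]
  set D : ℝ := 3 + 3 * |δ| with hD
  set U : ℝ := normV k₀ u with hUdef
  have hU : 0 ≤ U := Real.sqrt_nonneg _
  have habs : 0 ≤ |δ| := abs_nonneg δ
  have hD0 : (0:ℝ) ≤ D := by rw [hD]; linarith
  have hc1 : ‖(1 + (δ : ℂ))‖ ≤ D := by
    calc ‖(1 : ℂ) + (δ : ℂ)‖ ≤ ‖(1:ℂ)‖ + ‖(δ:ℂ)‖ := norm_add_le _ _
      _ = 1 + |δ| := by rw [norm_one, Complex.norm_real, Real.norm_eq_abs]
      _ ≤ D := by rw [hD]; linarith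
  have hc2 : ‖(2 - (δ : ℂ))‖ ≤ D := by
    calc ‖(2 : ℂ) - (δ : ℂ)‖ ≤ ‖(2:ℂ)‖ + ‖(δ:ℂ)‖ := norm_sub_le _ _
      _ = 2 + |δ| := by rw [Complex.norm_real, Real.norm_eq_abs]; norm_num
      _ ≤ D := by rw [hD]; linarith
  have hc3 : ‖(1 - 2 * (δ : ℂ))‖ ≤ D := by
    calc ‖(1 : ℂ) - 2 * (δ : ℂ)‖ ≤ ‖(1:ℂ)‖ + ‖2 * (δ:ℂ)‖ := norm_sub_le _ _
      _ = 1 + 2 * |δ| := by rw [norm_one, norm_mul, Complex.norm_real, Real.norm_eq_abs]; norm_num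
      _ ≤ D := by rw [hD]; linarith
  have hy1 : (0:ℝ) ≤ ‖ext v (N + 1)‖ := norm_nonneg _
  have hy2 : (0:ℝ) ≤ ‖ext v (N + 2)‖ := norm_nonneg _
  have hy3 : (0:ℝ) ≤ ‖ext v (N - 1)‖ := norm_nonneg _
  have hy4 : (0:ℝ) ≤ ‖ext v (N - 2)‖ := norm_nonneg _
  -- group 1
  have H1 : ‖Complex.I / 3 * (kseq k₀ (N + 1) : ℂ) *
      ((1 + (δ : ℂ)) * conj (ext v (N + 1)) * ext u (N + 2)
        + (2 - (δ : ℂ)) * conj (ext u (N + 1)) * ext v (N + 2))‖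
      ≤ 2 * D / 3 * U * ‖ext v (N + 1)‖ + 2 * D / 3 * U * ‖ext v (N + 2)‖ := by
    rw [group_norm hk₀]
    calc kseq k₀ (N + 1) / 3 * ‖_ + _‖
        ≤ kseq k₀ (N + 1) / 3 * (‖(1 + (δ : ℂ)) * conj (ext v (N + 1)) * ext u (N + 2)‖
            + ‖(2 - (δ : ℂ)) * conj (ext u (N + 1)) * ext v (N + 2)‖) :=
          mul_le_mul_of_nonneg_left (norm_add_le _ _) (div_nonneg (kseq_pos hk₀ (N+1)).le (by norm_num))
      _ = kseq k₀ (N + 1) / 3 * ‖(1 + (δ : ℂ)) * conj (ext v (N + 1)) * ext u (N + 2)‖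
            + kseq k₀ (N + 1) / 3 * ‖(2 - (δ : ℂ)) * conj (ext u (N + 1)) * ext v (N + 2)‖ := by
          ring
      _ ≤ 2 * D / 3 * U * ‖ext v (N + 1)‖ + 2 * D / 3 * U * ‖ext v (N + 2)‖ := by
          apply add_le_add
          · exact term_bound hk₀ hu (by omega) hD0 hy1 (triA hc1)
          · exact term_bound hk₀ hu (by omega) hD0 hy2 (triB hc2)
  -- group 2
  have H2 : ‖Complex.I / 3 * (kseq k₀ N : ℂ) *
      ((1 - 2 * (δ : ℂ)) * conj (ext u (N - 1)) * ext v (N + 1)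
        - (1 + (δ : ℂ)) * conj (ext v (N - 1)) * ext u (N + 1))‖
      ≤ 2 * D / 3 * U * ‖ext v (N + 1)‖ + 2 * D / 3 * U * ‖ext v (N - 1)‖ := by
    rw [group_norm hk₀]
    calc kseq k₀ N / 3 * ‖_ - _‖
        ≤ kseq k₀ N / 3 * (‖(1 - 2 * (δ : ℂ)) * conj (ext u (N - 1)) * ext v (N + 1)‖
            + ‖(1 + (δ : ℂ)) * conj (ext v (N - 1)) * ext u (N + 1)‖) :=
          mul_le_mul_of_nonneg_left (norm_sub_le _ _) (div_nonneg (kseq_pos hk₀ N).le (by norm_num))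
      _ = kseq k₀ N / 3 * ‖(1 - 2 * (δ : ℂ)) * conj (ext u (N - 1)) * ext v (N + 1)‖
            + kseq k₀ N / 3 * ‖(1 + (δ : ℂ)) * conj (ext v (N - 1)) * ext u (N + 1)‖ := by
          ring
      _ ≤ 2 * D / 3 * U * ‖ext v (N + 1)‖ + 2 * D / 3 * U * ‖ext v (N - 1)‖ := by
          apply add_le_add
          · exact term_bound hk₀ hu (by omega) hD0 hy1 (triB hc3)
          · exact term_bound hk₀ hu (by omega) hD0 hy3 (triA hc1)
  -- group 3
  have H3 : ‖Complex.I / 3 * (kseq k₀ (N - 1) : ℂ) *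
      ((2 - (δ : ℂ)) * ext u (N - 1) * ext v (N - 2)
        + (1 - 2 * (δ : ℂ)) * ext u (N - 2) * ext v (N - 1))‖
      ≤ 2 * D / 3 * U * ‖ext v (N - 2)‖ + 2 * D / 3 * U * ‖ext v (N - 1)‖ := by
    rw [group_norm hk₀]
    calc kseq k₀ (N - 1) / 3 * ‖_ + _‖
        ≤ kseq k₀ (N - 1) / 3 * (‖(2 - (δ : ℂ)) * ext u (N - 1) * ext v (N - 2)‖
            + ‖(1 - 2 * (δ : ℂ)) * ext u (N - 2) * ext v (N - 1)‖) :=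
          mul_le_mul_of_nonneg_left (norm_add_le _ _) (div_nonneg (kseq_pos hk₀ (N-1)).le (by norm_num))
      _ = kseq k₀ (N - 1) / 3 * ‖(2 - (δ : ℂ)) * ext u (N - 1) * ext v (N - 2)‖
            + kseq k₀ (N - 1) / 3 * ‖(1 - 2 * (δ : ℂ)) * ext u (N - 2) * ext v (N - 1)‖ := by
          ring
      _ ≤ 2 * D / 3 * U * ‖ext v (N - 2)‖ + 2 * D / 3 * U * ‖ext v (N - 1)‖ := by
          apply add_le_add
          · exact term_bound hk₀ hu (by omega) hD0 hy4 (triC hc2)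
          · exact term_bound hk₀ hu (by omega) hD0 hy3 (triC hc3)
  have Htri := norm_add₃_le (a := Complex.I / 3 * (kseq k₀ (N + 1) : ℂ) *
        ((1 + (δ : ℂ)) * conj (ext v (N + 1)) * ext u (N + 2)
          + (2 - (δ : ℂ)) * conj (ext u (N + 1)) * ext v (N + 2)))
      (b := Complex.I / 3 * (kseq k₀ N : ℂ) *
        ((1 - 2 * (δ : ℂ)) * conj (ext u (N - 1)) * ext v (N + 1)
          - (1 + (δ : ℂ)) * conj (ext v (N - 1)) * ext u (N + 1)))
      (c := Complex.I / 3 * (kseq k₀ (N - 1) : ℂ) *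
        ((2 - (δ : ℂ)) * ext u (N - 1) * ext v (N - 2)
          + (1 - 2 * (δ : ℂ)) * ext u (N - 2) * ext v (N - 1)))
  have hfin : (4 + 4 * |δ|) = 4 * D / 3 := by rw [hD]; ring
  rw [hfin]
  nlinarith [Htri, H1, H2, H3, mul_nonneg (mul_nonneg hD0 hU) hy1,
    mul_nonneg (mul_nonneg hD0 hU) hy2, mul_nonneg (mul_nonneg hD0 hU) hy3,
    mul_nonneg (mul_nonneg hD0 hU) hy4]

private lemma four_sq {a b c d : ℝ} : (a + b + c + d) ^ 2 ≤ 4 * (a^2 + b^2 + c^2 + d^2) := by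
  nlinarith [sq_nonneg (a - b), sq_nonneg (a - c), sq_nonneg (a - d), sq_nonneg (b - c),
    sq_nonneg (b - d), sq_nonneg (c - d)]


/-- There is `C > 0` such that for every `u ∈ V` and `v ∈ H`, `B(u,v) ∈ H` and
`|B(u,v)|_H ≤ C ‖u‖_V |v|_H`, where `B` is the Sabra bilinear operator with parameter `δ`. -/
theorem sabra_estimate_VH (k₀ δ : ℝ) (hk₀ : 0 < k₀) :
    ∃ C : ℝ, 0 < C ∧ ∀ u v : ℕ → ℂ, memV k₀ u → memH v →
      memH (sabraB k₀ δ u v) ∧ normH (sabraB k₀ δ u v) ≤ C * normV k₀ u * normH v := by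
  refine ⟨4 * (4 + 4 * |δ|), by positivity, ?_⟩
  intro u v hu hv
  set E : ℝ := 4 + 4 * |δ| with hE
  have hE0 : 0 < E := by positivity
  set U : ℝ := normV k₀ u with hU
  have hU0 : 0 ≤ U := Real.sqrt_nonneg _
  have S1 := shift_fwd v hv 1
  have S2 := shift_fwd v hv 2
  have S3 := shift_bwd v hv 1
  have S4 := shift_bwd v hv 2
  push_cast at S1 S2 S3 S4
  set T : ℝ := ∑' n : ℕ, ‖v (n + 1)‖ ^ 2 with hT
  have hT0 : 0 ≤ T := tsum_nonneg (fun n => by positivity)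
  have hpt : ∀ m : ℕ, ‖sabraB k₀ δ u v (m + 1)‖ ≤
      E * U * (‖ext v ((m : ℤ) + 1 + 1)‖ + ‖ext v ((m : ℤ) + 2 + 1)‖ +
        ‖ext v ((m : ℤ) - 1 + 1)‖ + ‖ext v ((m : ℤ) - 2 + 1)‖) := by
    intro m
    have h := master k₀ δ hk₀ v hu ((m : ℤ) + 1)
    have i2 : (m : ℤ) + 1 + 2 = (m : ℤ) + 2 + 1 := by ring
    have i3 : (m : ℤ) + 1 - 1 = (m : ℤ) - 1 + 1 := by ring
    have i4 : (m : ℤ) + 1 - 2 = (m : ℤ) - 2 + 1 := by ring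
    rw [i2, i3, i4] at h
    have key : sabraB k₀ δ u v (m + 1) = BX k₀ δ u v ((m : ℤ) + 1) := by
      simp only [sabraB, BX]
      push_cast
      ring_nf
    rw [key]
    exact h
  have hsq : ∀ m : ℕ, ‖sabraB k₀ δ u v (m + 1)‖ ^ 2 ≤
      (E * U) ^ 2 * 4 * (‖ext v ((m : ℤ) + 1 + 1)‖ ^ 2 + ‖ext v ((m : ℤ) + 2 + 1)‖ ^ 2 +
        ‖ext v ((m : ℤ) - 1 + 1)‖ ^ 2 + ‖ext v ((m : ℤ) - 2 + 1)‖ ^ 2) := by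
    intro m
    have h0 : (0:ℝ) ≤ ‖sabraB k₀ δ u v (m + 1)‖ := norm_nonneg _
    calc ‖sabraB k₀ δ u v (m + 1)‖ ^ 2
        ≤ (E * U * (‖ext v ((m : ℤ) + 1 + 1)‖ + ‖ext v ((m : ℤ) + 2 + 1)‖ +
            ‖ext v ((m : ℤ) - 1 + 1)‖ + ‖ext v ((m : ℤ) - 2 + 1)‖)) ^ 2 :=
          pow_le_pow_left₀ h0 (hpt m) 2
      _ = (E * U) ^ 2 * (‖ext v ((m : ℤ) + 1 + 1)‖ + ‖ext v ((m : ℤ) + 2 + 1)‖ +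
            ‖ext v ((m : ℤ) - 1 + 1)‖ + ‖ext v ((m : ℤ) - 2 + 1)‖) ^ 2 := by ring
      _ ≤ (E * U) ^ 2 * (4 * (‖ext v ((m : ℤ) + 1 + 1)‖ ^ 2 + ‖ext v ((m : ℤ) + 2 + 1)‖ ^ 2 +
            ‖ext v ((m : ℤ) - 1 + 1)‖ ^ 2 + ‖ext v ((m : ℤ) - 2 + 1)‖ ^ 2)) := by
          have h4 : (‖ext v ((m : ℤ) + 1 + 1)‖ + ‖ext v ((m : ℤ) + 2 + 1)‖ +
              ‖ext v ((m : ℤ) - 1 + 1)‖ + ‖ext v ((m : ℤ) - 2 + 1)‖) ^ 2 ≤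
              4 * (‖ext v ((m : ℤ) + 1 + 1)‖ ^ 2 + ‖ext v ((m : ℤ) + 2 + 1)‖ ^ 2 +
                ‖ext v ((m : ℤ) - 1 + 1)‖ ^ 2 + ‖ext v ((m : ℤ) - 2 + 1)‖ ^ 2) := by
            have := @four_sq ‖ext v ((m : ℤ) + 1 + 1)‖ ‖ext v ((m : ℤ) + 2 + 1)‖
              ‖ext v ((m : ℤ) - 1 + 1)‖ ‖ext v ((m : ℤ) - 2 + 1)‖
            linarith
          exact mul_le_mul_of_nonneg_left h4 (sq_nonneg _)
      _ = (E * U) ^ 2 * 4 * (‖ext v ((m : ℤ) + 1 + 1)‖ ^ 2 + ‖ext v ((m : ℤ) + 2 + 1)‖ ^ 2 +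
            ‖ext v ((m : ℤ) - 1 + 1)‖ ^ 2 + ‖ext v ((m : ℤ) - 2 + 1)‖ ^ 2) := by ring
  have hQ : Summable (fun m : ℕ => ‖ext v ((m : ℤ) + 1 + 1)‖ ^ 2 + ‖ext v ((m : ℤ) + 2 + 1)‖ ^ 2 +
      ‖ext v ((m : ℤ) - 1 + 1)‖ ^ 2 + ‖ext v ((m : ℤ) - 2 + 1)‖ ^ 2) :=
    ((S1.1.add S2.1).add S3.1).add S4.1
  have hG : Summable (fun m : ℕ => (E * U) ^ 2 * 4 *
      (‖ext v ((m : ℤ) + 1 + 1)‖ ^ 2 + ‖ext v ((m : ℤ) + 2 + 1)‖ ^ 2 +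
        ‖ext v ((m : ℤ) - 1 + 1)‖ ^ 2 + ‖ext v ((m : ℤ) - 2 + 1)‖ ^ 2)) :=
    hQ.mul_left _
  have hF : Summable (fun m : ℕ => ‖sabraB k₀ δ u v (m + 1)‖ ^ 2) :=
    Summable.of_nonneg_of_le (fun m => by positivity) hsq hG
  refine ⟨hF, ?_⟩
  have htsum : (∑' m : ℕ, ‖sabraB k₀ δ u v (m + 1)‖ ^ 2) ≤ (4 * E * U) ^ 2 * T := by
    have h1 : (∑' m : ℕ, ‖sabraB k₀ δ u v (m + 1)‖ ^ 2) ≤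
        ∑' m : ℕ, (E * U) ^ 2 * 4 *
          (‖ext v ((m : ℤ) + 1 + 1)‖ ^ 2 + ‖ext v ((m : ℤ) + 2 + 1)‖ ^ 2 +
            ‖ext v ((m : ℤ) - 1 + 1)‖ ^ 2 + ‖ext v ((m : ℤ) - 2 + 1)‖ ^ 2) :=
      Summable.tsum_le_tsum hsq hF hG
    have h2 : (∑' m : ℕ, (E * U) ^ 2 * 4 *
        (‖ext v ((m : ℤ) + 1 + 1)‖ ^ 2 + ‖ext v ((m : ℤ) + 2 + 1)‖ ^ 2 +
          ‖ext v ((m : ℤ) - 1 + 1)‖ ^ 2 + ‖ext v ((m : ℤ) - 2 + 1)‖ ^ 2)) =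
        (E * U) ^ 2 * 4 * ∑' m : ℕ,
          (‖ext v ((m : ℤ) + 1 + 1)‖ ^ 2 + ‖ext v ((m : ℤ) + 2 + 1)‖ ^ 2 +
            ‖ext v ((m : ℤ) - 1 + 1)‖ ^ 2 + ‖ext v ((m : ℤ) - 2 + 1)‖ ^ 2) :=
      tsum_mul_left
    have h3 : (∑' m : ℕ,
        (‖ext v ((m : ℤ) + 1 + 1)‖ ^ 2 + ‖ext v ((m : ℤ) + 2 + 1)‖ ^ 2 +
          ‖ext v ((m : ℤ) - 1 + 1)‖ ^ 2 + ‖ext v ((m : ℤ) - 2 + 1)‖ ^ 2)) ≤ 4 * T := by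
      rw [Summable.tsum_add ((S1.1.add S2.1).add S3.1) S4.1, Summable.tsum_add (S1.1.add S2.1) S3.1,
        Summable.tsum_add S1.1 S2.1]
      linarith [S1.2, S2.2, S3.2, S4.2]
    calc (∑' m : ℕ, ‖sabraB k₀ δ u v (m + 1)‖ ^ 2)
        ≤ (E * U) ^ 2 * 4 * ∑' m : ℕ,
          (‖ext v ((m : ℤ) + 1 + 1)‖ ^ 2 + ‖ext v ((m : ℤ) + 2 + 1)‖ ^ 2 +
            ‖ext v ((m : ℤ) - 1 + 1)‖ ^ 2 + ‖ext v ((m : ℤ) - 2 + 1)‖ ^ 2) := by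
          rw [← h2]; exact h1
      _ ≤ (E * U) ^ 2 * 4 * (4 * T) := by
          apply mul_le_mul_of_nonneg_left h3 (by positivity)
      _ = (4 * E * U) ^ 2 * T := by ring
  have hnn : (0:ℝ) ≤ 4 * E * U := by positivity
  calc normH (sabraB k₀ δ u v) = Real.sqrt (∑' m : ℕ, ‖sabraB k₀ δ u v (m + 1)‖ ^ 2) := rfl
    _ ≤ Real.sqrt ((4 * E * U) ^ 2 * T) := Real.sqrt_le_sqrt htsum
    _ = (4 * E * U) * Real.sqrt T := by
        rw [Real.sqrt_mul (sq_nonneg _), Real.sqrt_sq hnn]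
    _ = 4 * E * U * normH v := rfl

end
end

section
/- For the GOY bilinear operator B, for all u, v ∈ H and all z ∈ V one has ⟨B(u,v), z⟩_{V',V} = −⟨B(u,z), v⟩_H, where ⟨f, z⟩_{V',V} = Re Σ_{n≥1} f_n conj(z_n) denotes the dual pairing between V' and V. -/
open ComplexConjugate

noncomputable section

/-- The GOY bilinear operator. -/
def goyB (k₀ : ℝ) (u v : ℕ → ℂ) : ℕ → ℂ := fun n =>
  Complex.I * (kseq k₀ n) *
    ( (1/4 : ℂ) * conj (ext v ((n : ℤ) - 1)) * conj (ext u ((n : ℤ) + 1))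
      - (1/2 : ℂ) * (conj (ext u ((n : ℤ) + 1)) * conj (ext v ((n : ℤ) + 2))
          + conj (ext v ((n : ℤ) + 1)) * conj (ext u ((n : ℤ) + 2)))
      + (1/8 : ℂ) * conj (ext u ((n : ℤ) - 1)) * conj (ext v ((n : ℤ) - 2)) )

/-- The real inner product of `H` (and the dual pairing between `V'` and `V`):
`Re ∑_{n ≥ 1} u_n conj(v_n)`. -/
def pairing (u v : ℕ → ℂ) : ℝ := ∑' n : ℕ, (u (n + 1) * conj (v (n + 1))).re

/-!
Extend sequences by zero to `ℤ`; the boundary convention of `B` is then automatic and every sum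
runs over all of `ℤ`, where index shifts are free. With `U, V, Z` the extensions of `u, v, z`,
`⟨B(u,v), z⟩ = ∑ₙ kₙ Im(¼ Uₙ₊₁Vₙ₋₁Zₙ - ½ Uₙ₊₁Vₙ₊₂Zₙ - ½ Uₙ₊₂Vₙ₊₁Zₙ + ⅛ Uₙ₋₁Vₙ₋₂Zₙ)`.
Shifting `n` by `s` multiplies `kₙ` by `2^s`, and a shift of `±1` or `±2` turns each of the four
monomials into one of `⟨B(u,z), v⟩` (with `V` and `Z` exchanged); the GOY coefficients are such that
they cancel in pairs. Splitting the sum into the four monomials is legitimate because `u, v ∈ ℓ²`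
and `kₙ zₙ` is bounded.
-/

lemma ext_of_nonpos (u : ℕ → ℂ) {m : ℤ} (hm : m ≤ 0) : ext u m = 0 :=
  if_neg (by omega)

lemma ext_natCast_add_one (u : ℕ → ℂ) (n : ℕ) : ext u ((n : ℤ) + 1) = u (n + 1) := by
  simp [ext]

lemma natCast_add_one_injective : Function.Injective fun n : ℕ => (n : ℤ) + 1 :=
  fun a b h => by simpa using h

lemma mem_range_natCast_add_one {m : ℤ} (hm : 0 < m) :
    m ∈ Set.range fun n : ℕ => (n : ℤ) + 1 :=
  ⟨(m - 1).toNat, by simp; omega⟩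

section SumsOverPositiveIntegers

variable {α : Type*} [AddCommMonoid α] [TopologicalSpace α] {f : ℤ → α}

lemma tsum_natCast_add_one_eq_tsum (hf : ∀ m ≤ 0, f m = 0) :
    ∑' n : ℕ, f ((n : ℤ) + 1) = ∑' m : ℤ, f m :=
  natCast_add_one_injective.tsum_eq fun m hm =>
    mem_range_natCast_add_one (not_le.mp fun h => hm (hf m h))

lemma summable_natCast_add_one_iff (hf : ∀ m ≤ 0, f m = 0) :
    (Summable fun n : ℕ => f ((n : ℤ) + 1)) ↔ Summable f :=
  natCast_add_one_injective.summable_iff fun m hm =>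
    hf m (not_lt.mp fun h => hm (mem_range_natCast_add_one h))

end SumsOverPositiveIntegers

lemma summable_norm_ext_sq {u : ℕ → ℂ} (hu : memH u) : Summable fun m : ℤ => ‖ext u m‖ ^ 2 :=
  (summable_natCast_add_one_iff fun m hm => by simp [ext_of_nonpos u hm]).mp <| by
    simp only [ext_natCast_add_one]; exact hu

lemma kseq_add (k₀ : ℝ) (m s : ℤ) : kseq k₀ (m + s) = 2 ^ s * kseq k₀ m := by
  rw [kseq, kseq, zpow_add₀ two_ne_zero]
  ring

lemma abs_kseq_mul_norm_ext_le {k₀ : ℝ} {z : ℕ → ℂ}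
    (hz : Summable fun n : ℕ => (kseq k₀ (n + 1)) ^ 2 * ‖z (n + 1)‖ ^ 2) (m : ℤ) :
    |kseq k₀ m * ‖ext z m‖| ≤ √(∑' n : ℕ, (kseq k₀ (n + 1)) ^ 2 * ‖z (n + 1)‖ ^ 2) := by
  rcases le_or_gt m 0 with hm | hm
  · simp [ext_of_nonpos z hm]
  · obtain ⟨n, rfl⟩ := mem_range_natCast_add_one hm
    rw [ext_natCast_add_one]
    exact Real.abs_le_sqrt <| (mul_pow _ _ 2).trans_le <|
      hz.le_tsum n fun _ _ => by positivity

def goyTriad (k₀ : ℝ) (U V Z : ℤ → ℂ) (a b c : ℤ) (n : ℤ) : ℝ :=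
  kseq k₀ n * (U (n + a) * V (n + b) * Z (n + c)).im

section Triad

variable {k₀ : ℝ} {U V Z : ℤ → ℂ}

lemma goyTriad_swap (a b c : ℤ) : goyTriad k₀ U V Z a b c = goyTriad k₀ U Z V a c b := by
  funext n
  simp only [goyTriad, mul_right_comm]

lemma tsum_goyTriad_shift (s a b c : ℤ) :
    ∑' n, goyTriad k₀ U V Z a b c n = 2 ^ s * ∑' n, goyTriad k₀ U V Z (a + s) (b + s) (c + s) n := by
  rw [← (Equiv.addRight s).tsum_eq (goyTriad k₀ U V Z a b c), ← tsum_mul_left]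
  congr 1
  funext n
  simp only [Equiv.coe_addRight, goyTriad, kseq_add, add_assoc, add_comm s]
  ring

lemma summable_goyTriad {C : ℝ} (hU : Summable fun n => ‖U n‖ ^ 2)
    (hV : Summable fun n => ‖V n‖ ^ 2) (hZ : ∀ n, |kseq k₀ n * ‖Z n‖| ≤ C) (a b c : ℤ) :
    Summable (goyTriad k₀ U V Z a b c) := by
  have hU' : Summable fun n => ‖U (n + a)‖ ^ 2 := hU.comp_injective (add_left_injective a)
  have hV' : Summable fun n => ‖V (n + b)‖ ^ 2 := hV.comp_injective (add_left_injective b)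
  refine .of_norm_bounded ((hU'.add hV').mul_left (2 ^ (-c) * C)) fun n => ?_
  have hk : |kseq k₀ n| * ‖Z (n + c)‖ ≤ 2 ^ (-c) * C := by
    have := hZ (n + c)
    rw [kseq_add, abs_mul, abs_mul, abs_norm, abs_of_pos (zpow_pos two_pos c)] at this
    rw [zpow_neg, le_inv_mul_iff₀ (zpow_pos two_pos c)]
    linarith
  have huv : ‖U (n + a)‖ * ‖V (n + b)‖ ≤ ‖U (n + a)‖ ^ 2 + ‖V (n + b)‖ ^ 2 := by
    linarith [two_mul_le_add_sq ‖U (n + a)‖ ‖V (n + b)‖,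
      mul_nonneg (norm_nonneg (U (n + a))) (norm_nonneg (V (n + b)))]
  calc ‖goyTriad k₀ U V Z a b c n‖
      ≤ |kseq k₀ n| * (‖U (n + a)‖ * ‖V (n + b)‖ * ‖Z (n + c)‖) := by
        rw [goyTriad, Real.norm_eq_abs, abs_mul, ← norm_mul, ← norm_mul]
        gcongr
        exact Complex.abs_im_le_norm _
    _ = (|kseq k₀ n| * ‖Z (n + c)‖) * (‖U (n + a)‖ * ‖V (n + b)‖) := by ring
    _ ≤ 2 ^ (-c) * C * (‖U (n + a)‖ ^ 2 + ‖V (n + b)‖ ^ 2) :=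
      mul_le_mul hk huv (by positivity) (hk.trans' (by positivity))

end Triad

def goyDensity (k₀ : ℝ) (U V Z : ℤ → ℂ) (n : ℤ) : ℝ :=
  1 / 4 * goyTriad k₀ U V Z 1 (-1) 0 n - 1 / 2 * goyTriad k₀ U V Z 1 2 0 n
    - 1 / 2 * goyTriad k₀ U V Z 2 1 0 n + 1 / 8 * goyTriad k₀ U V Z (-1) (-2) 0 n

-- `Re(i kₙ conj w) = kₙ Im w`, and the coefficients of `B` are real.
lemma re_goyB_mul_conj (k₀ : ℝ) (u v z : ℕ → ℂ) (n : ℕ) :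
    (goyB k₀ u v n * conj (ext z n)).re = goyDensity k₀ (ext u) (ext v) (ext z) n := by
  simp only [goyB, goyDensity, goyTriad, sub_eq_add_neg, add_zero, Complex.mul_re,
    Complex.mul_im, Complex.add_re, Complex.add_im, Complex.neg_re, Complex.neg_im, Complex.conj_re,
    Complex.conj_im, Complex.I_re, Complex.I_im, Complex.ofReal_re, Complex.ofReal_im, one_div,
    Complex.inv_re, Complex.inv_im, Complex.re_ofNat, Complex.im_ofNat, Complex.normSq_ofNat]
  ring

lemma pairing_goyB (k₀ : ℝ) (u v z : ℕ → ℂ) :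
    pairing (goyB k₀ u v) z = ∑' m : ℤ, goyDensity k₀ (ext u) (ext v) (ext z) m := by
  rw [← tsum_natCast_add_one_eq_tsum fun m hm => by
    simp [goyDensity, goyTriad, ext_of_nonpos z hm]]
  refine tsum_congr fun n => ?_
  rw [← ext_natCast_add_one z, ← Nat.cast_add_one, re_goyB_mul_conj]

section Density

variable {k₀ : ℝ} {U V Z : ℤ → ℂ}

lemma tsum_goyDensity (hT : ∀ a b c, Summable (goyTriad k₀ U V Z a b c)) :
    ∑' n, goyDensity k₀ U V Z n =
      1 / 4 * ∑' n, goyTriad k₀ U V Z 1 (-1) 0 n - 1 / 2 * ∑' n, goyTriad k₀ U V Z 1 2 0 n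
        - 1 / 2 * ∑' n, goyTriad k₀ U V Z 2 1 0 n
        + 1 / 8 * ∑' n, goyTriad k₀ U V Z (-1) (-2) 0 n :=
  ((((hT 1 (-1) 0).hasSum.mul_left (1 / 4)).sub ((hT 1 2 0).hasSum.mul_left (1 / 2))).sub
    ((hT 2 1 0).hasSum.mul_left (1 / 2))).add ((hT (-1) (-2) 0).hasSum.mul_left (1 / 8)) |>.tsum_eq

theorem tsum_goyDensity_swap (hT : ∀ a b c, Summable (goyTriad k₀ U V Z a b c)) :
    ∑' n, goyDensity k₀ U V Z n = -∑' n, goyDensity k₀ U Z V n := by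
  have hT' (a b c : ℤ) : Summable (goyTriad k₀ U Z V a b c) := goyTriad_swap a c b ▸ hT a c b
  have h₁ : ∑' n, goyTriad k₀ U V Z 1 (-1) 0 n = 2 * ∑' n, goyTriad k₀ U Z V 2 1 0 n := by
    rw [tsum_goyTriad_shift 1, goyTriad_swap]; norm_num
  have h₂ : ∑' n, goyTriad k₀ U V Z 1 2 0 n = 1 / 4 * ∑' n, goyTriad k₀ U Z V (-1) (-2) 0 n := by
    rw [tsum_goyTriad_shift (-2), goyTriad_swap]; norm_num
  have h₃ : ∑' n, goyTriad k₀ U V Z 2 1 0 n = 1 / 2 * ∑' n, goyTriad k₀ U Z V 1 (-1) 0 n := by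
    rw [goyTriad_swap, tsum_goyTriad_shift (-1)]; norm_num
  have h₄ : ∑' n, goyTriad k₀ U V Z (-1) (-2) 0 n = 4 * ∑' n, goyTriad k₀ U Z V 1 2 0 n := by
    rw [goyTriad_swap, tsum_goyTriad_shift 2]; norm_num
  rw [tsum_goyDensity hT, tsum_goyDensity hT', h₁, h₂, h₃, h₄]
  ring

end Density

theorem goy_extended_skew_symmetry_general (k₀ : ℝ) (u v z : ℕ → ℂ)
    (hu : memH u) (hv : memH v) (hz : memV k₀ z) :
    pairing (goyB k₀ u v) z = - pairing (goyB k₀ u z) v := by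
  rw [pairing_goyB, pairing_goyB]
  exact tsum_goyDensity_swap <| summable_goyTriad (summable_norm_ext_sq hu)
    (summable_norm_ext_sq hv) (abs_kseq_mul_norm_ext_le hz.2)

/-- For the GOY operator `B`, for all `u, v ∈ H` and `z ∈ V` one has
`⟨B(u,v), z⟩_{V',V} = −⟨B(u,z), v⟩_H`. -/
theorem goy_extended_skew_symmetry (k₀ : ℝ) (hk₀ : 0 < k₀) (u v z : ℕ → ℂ)
    (hu : memH u) (hv : memH v) (hz : memV k₀ z) :
    pairing (goyB k₀ u v) z = - pairing (goyB k₀ u z) v :=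
  goy_extended_skew_symmetry_general k₀ u v z hu hv hz

end
end
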